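/- Let x = [r, t] be a motion with ‖r‖₂ < 2π and t ∈ ℝ³. Then M(Û(x)) = x; that is, R(U(r)) = r and the imaginary part of 2·U(r)⁻¹·((1/2)·U(r)·t̃) equals t, where t̃ = [0, t]. -/

import Mathlib

open scoped Classical in
/-- The UQ operator `U : ℝ³ → ℍ`, `U(r) = [cos(‖r‖/2), (r/‖r‖)·sin(‖r‖/2)]` for `r ≠ 0`, `U(0) = 1`. -/
noncomputable def UQ (r : EuclideanSpace ℝ (Fin 3)) : Quaternion ℝ :=
  if r = 0 then 1 else
    ⟨Real.cos (‖r‖ / 2),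
     Real.sin (‖r‖ / 2) / ‖r‖ * r 0,
     Real.sin (‖r‖ / 2) / ‖r‖ * r 1,
     Real.sin (‖r‖ / 2) / ‖r‖ * r 2⟩

/-- The rotation operator `R : ℍ → ℝ³`,
`R(q) = (2·arccos(q₀)/√(q₁²+q₂²+q₃²))·(q₁,q₂,q₃)` if `q₀² ≠ 1`, and `0` otherwise. -/
noncomputable def Rop (q : Quaternion ℝ) : EuclideanSpace ℝ (Fin 3) :=
  if q.re ^ 2 = 1 then 0 else
    (2 * Real.arccos q.re / Real.sqrt (q.imI ^ 2 + q.imJ ^ 2 + q.imK ^ 2)) •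
      (WithLp.equiv 2 (Fin 3 → ℝ)).symm ![q.imI, q.imJ, q.imK]

/-- The vector quaternion `t̃ = [0, t]` associated with `t ∈ ℝ³`. -/
noncomputable def tq (t : EuclideanSpace ℝ (Fin 3)) : Quaternion ℝ := ⟨0, t 0, t 1, t 2⟩

/-- The imaginary part of a quaternion, as a vector in `ℝ³`. -/
noncomputable def imVec (q : Quaternion ℝ) : EuclideanSpace ℝ (Fin 3) :=
  (WithLp.equiv 2 (Fin 3 → ℝ)).symm ![q.imI, q.imJ, q.imK]
/-!
`U(r)` is the unit quaternion with real part `cos θ` and imaginary part `(sin θ / ‖r‖) • r`,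
where `θ = ‖r‖ / 2`. For `0 < θ < π` the sine is positive and `arccos (cos θ) = θ`, so `R`
rescales the imaginary part by `2θ / sin θ` and recovers `r`. The translation part is just
the cancellation `U(r)⁻¹ * U(r) = 1`, valid because `U(r)` has norm one.
-/

lemma EuclideanSpace.norm_sq_fin_three (v : EuclideanSpace ℝ (Fin 3)) :
    ‖v‖ ^ 2 = v 0 ^ 2 + v 1 ^ 2 + v 2 ^ 2 := by
  simp [EuclideanSpace.real_norm_sq_eq, Fin.sum_univ_three]

lemma norm_imVec_sq (q : Quaternion ℝ) : ‖imVec q‖ ^ 2 = q.imI ^ 2 + q.imJ ^ 2 + q.imK ^ 2 :=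
  EuclideanSpace.norm_sq_fin_three _

lemma Rop_eq_ite (q : Quaternion ℝ) :
    Rop q = if q.re ^ 2 = 1 then 0 else (2 * Real.arccos q.re / ‖imVec q‖) • imVec q := by
  rw [Rop, ← norm_imVec_sq, Real.sqrt_sq (norm_nonneg _)]
  rfl

lemma imVec_tq (t : EuclideanSpace ℝ (Fin 3)) : imVec (tq t) = t := by
  ext i; fin_cases i <;> rfl

-- At `r = 0` the formula of the nonzero case still gives `1`, because `‖r‖⁻¹ = 0` there.
lemma UQ_eq_mk (r : EuclideanSpace ℝ (Fin 3)) :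
    UQ r = ⟨Real.cos (‖r‖ / 2), Real.sin (‖r‖ / 2) / ‖r‖ * r 0,
      Real.sin (‖r‖ / 2) / ‖r‖ * r 1, Real.sin (‖r‖ / 2) / ‖r‖ * r 2⟩ := by
  by_cases hr : r = 0
  · subst hr
    ext <;> simp [UQ, Quaternion.re_one, Quaternion.imI_one, Quaternion.imJ_one,
      Quaternion.imK_one]
  · exact if_neg hr

lemma re_UQ (r : EuclideanSpace ℝ (Fin 3)) : (UQ r).re = Real.cos (‖r‖ / 2) := by
  rw [UQ_eq_mk]

lemma imVec_UQ (r : EuclideanSpace ℝ (Fin 3)) :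
    imVec (UQ r) = (Real.sin (‖r‖ / 2) / ‖r‖) • r := by
  rw [UQ_eq_mk]; ext i; fin_cases i <;> rfl

lemma norm_imVec_UQ (r : EuclideanSpace ℝ (Fin 3)) :
    ‖imVec (UQ r)‖ = |Real.sin (‖r‖ / 2)| := by
  rcases eq_or_ne r 0 with rfl | hr
  · simp [imVec_UQ]
  · rw [imVec_UQ, norm_smul, Real.norm_eq_abs, abs_div, abs_norm,
      div_mul_cancel₀ _ (norm_ne_zero_iff.mpr hr)]

lemma normSq_UQ (r : EuclideanSpace ℝ (Fin 3)) : Quaternion.normSq (UQ r) = 1 := by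
  have h := norm_imVec_sq (UQ r)
  rw [norm_imVec_UQ, sq_abs] at h
  rw [Quaternion.normSq_def', re_UQ]
  linarith [Real.cos_sq_add_sin_sq (‖r‖ / 2)]

lemma UQ_ne_zero (r : EuclideanSpace ℝ (Fin 3)) : UQ r ≠ 0 := by
  rw [← Quaternion.normSq_ne_zero, normSq_UQ]; exact one_ne_zero

lemma Rop_UQ {r : EuclideanSpace ℝ (Fin 3)} (hr : ‖r‖ < 2 * Real.pi) : Rop (UQ r) = r := by
  rcases eq_or_ne r 0 with rfl | hr0
  · simp [Rop_eq_ite, re_UQ]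
  have hθ : 0 < ‖r‖ / 2 := by positivity
  have hθπ : ‖r‖ / 2 < Real.pi := by linarith
  have hsin : 0 < Real.sin (‖r‖ / 2) := Real.sin_pos_of_pos_of_lt_pi hθ hθπ
  have hcos : Real.cos (‖r‖ / 2) ^ 2 ≠ 1 := by
    rw [← Real.sin_sq_add_cos_sq (‖r‖ / 2)]; nlinarith
  rw [Rop_eq_ite, re_UQ, if_neg hcos, norm_imVec_UQ, abs_of_pos hsin,
    Real.arccos_cos hθ.le hθπ.le, imVec_UQ, smul_smul]
  have : ‖r‖ ≠ 0 := norm_ne_zero_iff.mpr hr0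
  field_simp
  simp

lemma Quaternion.two_mul_inv_mul_half_smul {q : Quaternion ℝ} (hq : q ≠ 0) (x : Quaternion ℝ) :
    2 * q⁻¹ * ((2⁻¹ : ℝ) • (q * x)) = x := by
  rw [mul_smul_comm, mul_assoc, inv_mul_cancel_left₀ hq, two_mul, ← two_smul ℝ x, smul_smul,
    inv_mul_cancel₀ two_ne_zero, one_smul]

/-- For a motion `x = [r, t]` with `‖r‖₂ < 2π`, one has `M(Û(x)) = x`: namely `R(U(r)) = r`, and the imaginary part of `2·U(r)⁻¹·((1/2)·U(r)·t̃)` equals `t`. -/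
theorem motion_Uhat (r t : EuclideanSpace ℝ (Fin 3)) (hr : ‖r‖ < 2 * Real.pi) :
    Rop (UQ r) = r ∧
      imVec ((2 : Quaternion ℝ) * (UQ r)⁻¹ * ((2⁻¹ : ℝ) • (UQ r * tq t))) = t :=
  ⟨Rop_UQ hr, by rw [Quaternion.two_mul_inv_mul_half_smul (UQ_ne_zero r), imVec_tq]⟩
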